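/- For every positive integer n and every k with 1 ≤ k ≤ n, the polynomial \overline{B}_{n,k}(t) = B_{n,k}(t) + B_{n,-k}(t) is gamma-positive with center of symmetry n/2; that is, there exist nonnegative reals γ_0, …, γ_{⌊n/2⌋} such that \overline{B}_{n,k}(t) = Σ_{i=0}^{⌊n/2⌋} γ_i t^i (1+t)^{n-2i}. -/

import Mathlib

open Finset Polynomial

/-- A signed permutation in the hyperoctahedral group `𝔅_n` is modelled by a permutation of
`Fin n` together with a sign vector.  `sval p i` is the value `π_i = π(i)` of the associated
bijection of `{-n,…,-1,1,…,n}` (with `π(-i) = -π(i)` and the convention `π_0 = 0`). -/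
def sval {n : ℕ} (p : Equiv.Perm (Fin n) × (Fin n → Bool)) (i : ℤ) : ℤ :=
  if h : 1 ≤ i ∧ i ≤ (n : ℤ) then
    (if p.2 ⟨(i - 1).toNat, by omega⟩ then -1 else 1) *
      (((p.1 ⟨(i - 1).toNat, by omega⟩ : Fin n) : ℕ) + 1)
  else if h' : 1 ≤ -i ∧ -i ≤ (n : ℤ) then
    -((if p.2 ⟨(-i - 1).toNat, by omega⟩ then -1 else 1) *
      (((p.1 ⟨(-i - 1).toNat, by omega⟩ : Fin n) : ℕ) + 1))
  else 0

/-- The type B descent number `des_B(π) = |{i ∈ {0,…,n-1} : π_i > π_{i+1}}|` (with `π_0 = 0`). -/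
def desB {n : ℕ} (p : Equiv.Perm (Fin n) × (Fin n → Bool)) : ℕ :=
  (Finset.univ.filter (fun i : Fin n =>
    sval p (((i : ℕ) : ℤ) + 1) < sval p ((i : ℕ) : ℤ))).card

/-- The restricted type B Eulerian polynomial
`B_{n,k}(t) = ∑_{π ∈ 𝔅_n, π_1 = k} t^{des_B(π)}`, with real coefficients. -/
noncomputable def Bpoly (n : ℕ) (k : ℤ) : Polynomial ℝ :=
  ∑ p ∈ Finset.univ.filter
      (fun p : Equiv.Perm (Fin n) × (Fin n → Bool) => sval p 1 = k),
    Polynomial.X ^ desB p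

namespace Stmt7


noncomputable def Top (m : ℕ) (f : ℝ[X]) : ℝ[X] :=
  f + C 2 * X * (1 - X) * derivative f + C (2*(m:ℝ) - 3) * X * f

lemma Top_add (m : ℕ) (f g : ℝ[X]) : Top m (f + g) = Top m f + Top m g := by
  simp only [Top, derivative_add]; ring

lemma Top_Cmul (m : ℕ) (c : ℝ) (f : ℝ[X]) : Top m (C c * f) = C c * Top m f := by
  simp only [Top, derivative_C_mul]; ring

lemma Top_zero (m : ℕ) : Top m 0 = 0 := by simp [Top]

lemma Top_sum {α : Type*} (m : ℕ) (s : Finset α) (f : α → ℝ[X]) :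
    Top m (∑ a ∈ s, f a) = ∑ a ∈ s, Top m (f a) := by
  classical
  induction s using Finset.induction_on with
  | empty => simp [Top_zero]
  | insert _ _ h ih => rw [Finset.sum_insert h, Finset.sum_insert h, Top_add, ih]

lemma X_mul_derivative_pow (d : ℕ) :
    (X:ℝ[X]) * derivative ((X:ℝ[X])^d) = C (d:ℝ) * X^d := by
  cases d with
  | zero => simp
  | succ m => rw [derivative_X_pow]; push_cast; ring_nf

lemma Top_monomial (m d : ℕ) :
    Top m ((X:ℝ[X])^d) = C (2*(d:ℝ)+1) * X^d + C (2*(m:ℝ)-3-2*(d:ℝ)) * X^(d+1) := by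
  unfold Top
  rw [show C (2:ℝ) * X * (1 - X) * derivative ((X:ℝ[X])^d)
      = C 2 * (1-X) * ((X:ℝ[X]) * derivative ((X:ℝ[X])^d)) by ring, X_mul_derivative_pow]
  simp only [map_sub, map_add, map_mul, map_ofNat, map_one]
  ring

noncomputable def eb (i b : ℕ) : ℝ[X] := X^i * (1+X)^b

lemma lemX (i : ℕ) : (X:ℝ[X]) * (C (i:ℝ) * X^(i-1)) = C (i:ℝ) * X^i := by
  cases i with
  | zero => simp
  | succ m => simp only [Nat.add_sub_cancel]; ring

lemma lemY (b : ℕ) : ((1:ℝ[X])+X) * (C (b:ℝ) * (1+X)^(b-1)) = C (b:ℝ) * (1+X)^b := by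
  cases b with
  | zero => simp
  | succ m => simp only [Nat.add_sub_cancel]; ring

lemma Dlem (i b : ℕ) : (X:ℝ[X]) * (1+X) * derivative (eb i b) =
    (C (i:ℝ) * (1+X) + C (b:ℝ) * X) * eb i b := by
  unfold eb
  rw [derivative_mul, derivative_X_pow, derivative_pow]
  simp only [derivative_add, derivative_one, derivative_X, zero_add, mul_one]
  have l1 := lemX i
  have l2 := lemY b
  linear_combination ((1+X:ℝ[X])^b*(1+X)) * l1 + ((X:ℝ[X])^i*X) * l2

lemma eb_succ_b (i b : ℕ) : eb i (b+1) = (1+X) * eb i b := by unfold eb; ring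

lemma eb_pred_sq (i b : ℕ) :
    C (4*(b:ℝ)) * ((1+X)^2 * eb (i+1) (b-1)) = C (4*(b:ℝ)) * (X*(1+X)*eb i b) := by
  cases b with
  | zero => simp
  | succ c =>
      congr 1
      unfold eb
      simp only [Nat.add_sub_cancel]
      ring

lemma one_add_X_ne_zero : ((1:ℝ[X]) + X) ≠ 0 := by
  intro h
  have := congrArg (fun p => Polynomial.coeff p 0) h
  simp at this

lemma idTa (i b : ℕ) :
    Top (2*i+b+1) (eb i b) =
      C (2*(i:ℝ)-1) * eb i (b+1) + C (4*(b:ℝ)) * eb (i+1) (b-1) + C 2 * eb i b := by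
  apply mul_left_cancel₀ (pow_ne_zero 2 one_add_X_ne_zero)
  unfold Top
  rw [show ((1:ℝ[X])+X)^2 * (eb i b + C 2 * X * (1 - X) * derivative (eb i b)
        + C (2*((2*i+b+1 : ℕ):ℝ) - 3) * X * eb i b)
      = (1+X)^2 * eb i b + C 2 * (1-X) * (1+X) * ((X*(1+X)) * derivative (eb i b))
        + C (2*((2*i+b+1 : ℕ):ℝ) - 3) * X * (1+X)^2 * eb i b by ring,
     show (X*(1+X)) * derivative (eb i b) = X*(1+X)*derivative (eb i b) by ring,
     Dlem, eb_succ_b,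
     show ((1:ℝ[X])+X)^2 * (C (2*(i:ℝ)-1) * ((1+X) * eb i b) + C (4*(b:ℝ)) * eb (i+1) (b-1)
        + C 2 * eb i b)
      = C (2*(i:ℝ)-1) * ((1+X)^3 * eb i b) + C (4*(b:ℝ)) * ((1+X)^2 * eb (i+1) (b-1))
        + C 2 * ((1+X)^2 * eb i b) by ring,
     eb_pred_sq]
  push_cast
  simp only [map_sub, map_add, map_mul, map_one, map_ofNat]
  ring

lemma idTb (i b : ℕ) :
    Top (2*i+b+2) (eb i b) =
      C (2*(i:ℝ)+1) * eb i (b+1) + C (4*(b:ℝ)) * eb (i+1) (b-1) := by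
  apply mul_left_cancel₀ (pow_ne_zero 2 one_add_X_ne_zero)
  unfold Top
  rw [show ((1:ℝ[X])+X)^2 * (eb i b + C 2 * X * (1 - X) * derivative (eb i b)
        + C (2*((2*i+b+2 : ℕ):ℝ) - 3) * X * eb i b)
      = (1+X)^2 * eb i b + C 2 * (1-X) * (1+X) * ((X*(1+X)) * derivative (eb i b))
        + C (2*((2*i+b+2 : ℕ):ℝ) - 3) * X * (1+X)^2 * eb i b by ring,
     show (X*(1+X)) * derivative (eb i b) = X*(1+X)*derivative (eb i b) by ring,
     Dlem, eb_succ_b,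
     show ((1:ℝ[X])+X)^2 * (C (2*(i:ℝ)+1) * ((1+X) * eb i b) + C (4*(b:ℝ)) * eb (i+1) (b-1))
      = C (2*(i:ℝ)+1) * ((1+X)^3 * eb i b) + C (4*(b:ℝ)) * ((1+X)^2 * eb (i+1) (b-1)) by ring,
     eb_pred_sq]
  push_cast
  simp only [map_sub, map_add, map_mul, map_one, map_ofNat]
  ring

/-- reflection of the basis elements -/
lemma reflect_one_add_X_pow (b : ℕ) :
    reflect b (((1:ℝ[X])+X)^b) = (1+X)^b := by
  induction b with
  | zero => simpa using reflect_C (1:ℝ) 0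
  | succ b ih =>
      have h1 : ((1:ℝ[X])+X).natDegree ≤ 1 := by
        simpa [add_comm] using (natDegree_X_add_C (1:ℝ)).le
      have h2 : (((1:ℝ[X])+X)^b).natDegree ≤ b :=
        le_trans (natDegree_pow_le) (by nlinarith [h1])
      have key := reflect_mul ((1:ℝ[X])+X) (((1:ℝ[X])+X)^b) h1 h2
      have hone : reflect 1 ((1:ℝ[X])+X) = 1 + X := by
        rw [reflect_add]
        have hX : reflect 1 (X:ℝ[X]) = 1 := by
          simpa using reflect_monomial 1 1 (R := ℝ)
        have h1' : reflect 1 (1:ℝ[X]) = X := by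
          simpa using reflect_C (1:ℝ) 1
        rw [hX, h1']; ring
      calc reflect (b+1) (((1:ℝ[X])+X)^(b+1))
          = reflect (1+b) (((1:ℝ[X])+X) * ((1:ℝ[X])+X)^b) := by
            rw [add_comm 1 b, pow_succ, mul_comm]
        _ = ((1:ℝ[X])+X) * ((1:ℝ[X])+X)^b := by rw [key, hone, ih]
        _ = ((1:ℝ[X])+X)^(b+1) := by rw [pow_succ]; ring
  
lemma reflect_eb {n i b : ℕ} (h : i + b ≤ n) :
    reflect n (eb i b) = eb (n - i - b) b := by
  unfold eb
  have hsplit : n = (n - b) + b := by omega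
  have h1 : ((X:ℝ[X])^i).natDegree ≤ n - b := by
    rw [natDegree_X_pow]; omega
  have h2 : (((1:ℝ[X])+X)^b).natDegree ≤ b := by
    have h1 : ((1:ℝ[X])+X).natDegree ≤ 1 := by
      simpa [add_comm] using (natDegree_X_add_C (1:ℝ)).le
    exact le_trans (natDegree_pow_le) (by nlinarith [h1])
  rw [show reflect n ((X:ℝ[X])^i * (1+X)^b) = reflect ((n-b)+b) ((X:ℝ[X])^i * (1+X)^b) by
        rw [← hsplit],
      reflect_mul _ _ h1 h2, reflect_monomial, reflect_one_add_X_pow,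
      revAt_le (by omega)]
  congr 2
  omega

/-- The nonnegative cone. -/
inductive G : ℕ → ℝ[X] → Prop
  | zero (n : ℕ) : G n 0
  | addA (n i : ℕ) (c : ℝ) (f : ℝ[X]) (hi : 1 ≤ i) (h2 : 2*i ≤ n) (hc : 0 ≤ c)
      (hf : G n f) : G n (f + C c * eb i (n - 2*i))
  | addB (n i : ℕ) (c : ℝ) (f : ℝ[X]) (h2 : 2*i + 1 ≤ n) (hc : 0 ≤ c)
      (hf : G n f) : G n (f + C c * eb i (n - 1 - 2*i))

lemma G_add {n : ℕ} {f g : ℝ[X]} (hf : G n f) (hg : G n g) : G n (f + g) := by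
  induction hg with
  | zero => simpa using hf
  | addA i c f' hi h2 hc hf' ih =>
      rw [← add_assoc]; exact G.addA n i c _ hi h2 hc ih
  | addB i c f' h2 hc hf' ih =>
      rw [← add_assoc]; exact G.addB n i c _ h2 hc ih

lemma G_singleA {n i : ℕ} {c : ℝ} (hi : 1 ≤ i) (h2 : 2*i ≤ n) (hc : 0 ≤ c) :
    G n (C c * eb i (n - 2*i)) := by
  simpa using G.addA n i c 0 hi h2 hc (G.zero n)

lemma G_singleB {n i : ℕ} {c : ℝ} (h2 : 2*i + 1 ≤ n) (hc : 0 ≤ c) :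
    G n (C c * eb i (n - 1 - 2*i)) := by
  simpa using G.addB n i c 0 h2 hc (G.zero n)

lemma G_sum {α : Type*} {n : ℕ} (s : Finset α) (f : α → ℝ[X])
    (h : ∀ a ∈ s, G n (f a)) : G n (∑ a ∈ s, f a) := by
  classical
  induction s using Finset.induction_on with
  | empty => simpa using G.zero n
  | insert _ _ hnot ih =>
      rw [Finset.sum_insert hnot]
      exact G_add (h _ (Finset.mem_insert_self _ _))
        (ih (fun a ha => h a (Finset.mem_insert_of_mem ha)))

lemma X_mul_eb (i b : ℕ) : (X:ℝ[X]) * eb i b = eb (i+1) b := by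
  unfold eb; ring

lemma G_TopBasisA {n i : ℕ} (hi : 1 ≤ i) (h2 : 2*i ≤ n) {c : ℝ} (hc : 0 ≤ c) :
    G (n+1) (C c * Top (n+1) (eb i (n - 2*i))) := by
  have hb : 2*i + (n - 2*i) + 1 = n + 1 := by omega
  have hexp := idTa i (n - 2*i)
  rw [hb] at hexp
  rw [hexp, mul_add, mul_add, ← mul_assoc, ← mul_assoc, ← mul_assoc, ← C_mul, ← C_mul, ← C_mul]
  have hi' : (1:ℝ) ≤ (i:ℝ) := by exact_mod_cast hi
  refine G_add (G_add ?_ ?_) ?_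
  · rw [show n - 2*i + 1 = (n+1) - 2*i by omega]
    exact G_singleA hi (by omega) (by nlinarith)
  · by_cases h3 : 2*i + 1 ≤ n
    · rw [show n - 2*i - 1 = (n+1) - 2*(i+1) by omega]
      exact G_singleA (by omega) (by omega) (by positivity)
    · rw [show n - 2*i = 0 by omega]
      simp only [Nat.cast_zero, mul_zero, map_zero]
      simpa using G.zero (n+1)
  · rw [show n - 2*i = (n+1) - 1 - 2*i by omega]
    exact G_singleB (by omega) (by nlinarith)

lemma G_TopBasisB {n i : ℕ} (h2 : 2*i + 1 ≤ n) {c : ℝ} (hc : 0 ≤ c) :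
    G (n+1) (C c * Top (n+1) (eb i (n - 1 - 2*i))) := by
  have hb : 2*i + (n - 1 - 2*i) + 2 = n + 1 := by omega
  have hexp := idTb i (n - 1 - 2*i)
  rw [hb] at hexp
  rw [hexp, mul_add, ← mul_assoc, ← mul_assoc, ← C_mul, ← C_mul]
  refine G_add ?_ ?_
  · rw [show n - 1 - 2*i + 1 = (n+1) - 1 - 2*i by omega]
    exact G_singleB (by omega) (by positivity)
  · by_cases h3 : 2*i + 2 ≤ n
    · rw [show n - 1 - 2*i - 1 = (n+1) - 1 - 2*(i+1) by omega]
      exact G_singleB (by omega) (by positivity)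
    · rw [show n - 1 - 2*i = 0 by omega]
      simp only [Nat.cast_zero, mul_zero, map_zero]
      simpa using G.zero (n+1)

lemma G_Top {n : ℕ} {f : ℝ[X]} (hf : G n f) : G (n+1) (Top (n+1) f) := by
  induction hf with
  | zero => rw [Top_zero]; exact G.zero _
  | addA i c f hi h2 hc hf ih =>
      rw [Top_add, Top_Cmul]; exact G_add ih (G_TopBasisA hi h2 hc)
  | addB i c f h2 hc hf ih =>
      rw [Top_add, Top_Cmul]; exact G_add ih (G_TopBasisB h2 hc)

lemma G_XR {n : ℕ} {f : ℝ[X]} (hf : G n f) : G (n+1) (X * f + reflect n f) := by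
  induction hf with
  | zero => simpa using G.zero (n+1)
  | addA i c f hi h2 hc hf ih =>
      rw [reflect_add, reflect_C_mul, reflect_eb (by omega),
        show n - i - (n - 2*i) = i by omega,
        show X*(f + C c * eb i (n-2*i)) + (reflect n f + C c * eb i (n-2*i))
            = (X*f + reflect n f) + C c * ((1+X) * eb i (n-2*i)) by ring,
        ← eb_succ_b, show n - 2*i + 1 = (n+1) - 2*i by omega]
      exact G_add ih (G_singleA hi (by omega) hc)
  | addB i c f h2 hc hf ih =>
      rw [reflect_add, reflect_C_mul, reflect_eb (by omega),
        show n - i - (n - 1 - 2*i) = i + 1 by omega,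
        show X*(f + C c * eb i (n-1-2*i)) + (reflect n f + C c * eb (i+1) (n-1-2*i))
            = (X*f + reflect n f) + (C c * (X * eb i (n-1-2*i)) + C c * eb (i+1) (n-1-2*i))
          by ring, X_mul_eb,
        show C c * eb (i+1) (n-1-2*i) + C c * eb (i+1) (n-1-2*i)
            = C (2*c) * eb (i+1) (n-1-2*i) by rw [show (2:ℝ)*c = c + c by ring, C_add]; ring,
        show n - 1 - 2*i = (n+1) - 2*(i+1) by omega]
      exact G_add ih (G_singleA (by omega) (by omega) (by positivity))

lemma gamma_step {N iidx n : ℕ} (hmem : iidx ∈ Finset.range N) (γ : ℕ → ℝ) (c : ℝ) :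
    ∑ j ∈ Finset.range N, C (if j = iidx then γ j + c else γ j) * X^j * (1+X)^(n-2*j)
      = (∑ j ∈ Finset.range N, C (γ j) * X^j * (1+X)^(n-2*j))
        + C c * X^iidx * (1+X)^(n-2*iidx) := by
  have hcongr : ∑ j ∈ (Finset.range N).erase iidx,
        C (if j = iidx then γ j + c else γ j) * X^j * (1+X)^(n-2*j)
      = ∑ j ∈ (Finset.range N).erase iidx, C (γ j) * X^j * (1+X)^(n-2*j) :=
    Finset.sum_congr rfl (fun j hj => by rw [if_neg (Finset.ne_of_mem_erase hj)])
  rw [← Finset.add_sum_erase _ _ hmem,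
      ← Finset.add_sum_erase _ (fun j => C (γ j) * X^j * (1+X)^(n-2*j)) hmem,
      hcongr, if_pos rfl, C_add]
  ring

lemma G_gamma {n : ℕ} {f : ℝ[X]} (hf : G n f) :
    ∃ γ : ℕ → ℝ, (∀ i, 0 ≤ γ i) ∧
      f + reflect n f
        = ∑ i ∈ Finset.range (n/2+1), C (γ i) * X^i * (1+X)^(n-2*i) := by
  induction hf with
  | zero => exact ⟨0, fun _ => le_refl 0, by simp⟩
  | addA i c f hi h2 hc hf ih =>
      obtain ⟨γ, hγ, hrep⟩ := ih
      have hmem : i ∈ Finset.range (n/2+1) := by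
        rw [Finset.mem_range]; omega
      refine ⟨fun j => if j = i then γ j + 2*c else γ j, ?_, ?_⟩
      · intro j
        show 0 ≤ if j = i then γ j + _ else γ j
        by_cases hj : j = i
        · rw [if_pos hj]; have := hγ j; linarith
        · rw [if_neg hj]; exact hγ j
      · rw [reflect_add, reflect_C_mul, reflect_eb (by omega),
          show n - i - (n - 2*i) = i by omega,
          show (f + C c * eb i (n-2*i)) + (reflect n f + C c * eb i (n-2*i))
              = (f + reflect n f) + C (2*c) * eb i (n-2*i)
            by rw [show (2:ℝ)*c = c + c by ring, C_add]; ring,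
          hrep, gamma_step hmem γ (2*c)]
        unfold eb
        ring
  | addB i c f h2 hc hf ih =>
      obtain ⟨γ, hγ, hrep⟩ := ih
      have hmem : i ∈ Finset.range (n/2+1) := by
        rw [Finset.mem_range]; omega
      refine ⟨fun j => if j = i then γ j + c else γ j, ?_, ?_⟩
      · intro j
        show 0 ≤ if j = i then γ j + _ else γ j
        by_cases hj : j = i
        · rw [if_pos hj]; have := hγ j; linarith
        · rw [if_neg hj]; exact hγ j
      · rw [reflect_add, reflect_C_mul, reflect_eb (by omega),
          show n - i - (n - 1 - 2*i) = i + 1 by omega,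
          show (f + C c * eb i (n-1-2*i)) + (reflect n f + C c * eb (i+1) (n-1-2*i))
              = (f + reflect n f) + C c * (eb i (n-1-2*i) + eb (i+1) (n-1-2*i)) by ring,
          show eb i (n-1-2*i) + eb (i+1) (n-1-2*i) = (1+X) * eb i (n-1-2*i) by
            rw [← X_mul_eb]; ring,
          ← eb_succ_b, show n - 1 - 2*i + 1 = n - 2*i by omega, hrep,
          gamma_step hmem γ c]
        unfold eb
        ring



def V {n : ℕ} (w : Fin n → ℤ) (j : ℕ) : ℤ :=
  if h : 1 ≤ j ∧ j ≤ n then w ⟨j-1, by omega⟩ else 0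

noncomputable def desW {n : ℕ} (w : Fin n → ℤ) : ℕ :=
  (Finset.univ.filter (fun i : Fin n => V w ((i:ℕ)+1) < V w (i:ℕ))).card

def SPw {n : ℕ} (w : Fin n → ℤ) : Prop :=
  (∀ i, 1 ≤ (w i).natAbs ∧ (w i).natAbs ≤ n) ∧
    Function.Injective (fun i => (w i).natAbs)

def toW {n : ℕ} (p : Equiv.Perm (Fin n) × (Fin n → Bool)) : Fin n → ℤ :=
  fun i => sval p (((i:ℕ):ℤ)+1)

noncomputable def WAll (n : ℕ) : Finset (Fin n → ℤ) := Finset.univ.image toW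

noncomputable def Wset (n : ℕ) (k : ℤ) : Finset (Fin n → ℤ) :=
  (WAll n).filter (fun w => V w 1 = k)

lemma toW_apply {n : ℕ} (p : Equiv.Perm (Fin n) × (Fin n → Bool)) (i : Fin n) :
    toW p i = (if p.2 i then -1 else 1) * ((p.1 i : ℕ) + 1) := by
  unfold toW sval
  have hc : (1:ℤ) ≤ ((i:ℕ):ℤ)+1 ∧ ((i:ℕ):ℤ)+1 ≤ (n:ℤ) := by
    constructor
    · omega
    · have := i.isLt; omega
  rw [dif_pos hc]
  have hidx : (⟨(((i:ℕ):ℤ)+1-1).toNat, by omega⟩ : Fin n) = i := by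
    apply Fin.ext
    simp
  rw [hidx]

lemma sval_eq_V {n : ℕ} (p : Equiv.Perm (Fin n) × (Fin n → Bool)) (j : ℕ) :
    sval p (j:ℤ) = V (toW p) j := by
  rcases Nat.eq_zero_or_pos j with h0 | h1
  · subst h0
    unfold sval V
    rw [dif_neg (by omega), dif_neg (by omega), dif_neg (by omega)]
  rcases le_or_gt j n with h2 | h2
  · unfold V
    rw [dif_pos ⟨h1, h2⟩]
    unfold toW
    congr 1
    push_cast
    omega
  · unfold sval V
    rw [dif_neg (by omega), dif_neg (by omega), dif_neg (by omega)]

lemma desB_eq_desW {n : ℕ} (p : Equiv.Perm (Fin n) × (Fin n → Bool)) :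
    desB p = desW (toW p) := by
  unfold desB desW
  congr 1
  apply Finset.filter_congr
  intro i _
  have h1 : sval p (((i:ℕ):ℤ)+1) = V (toW p) ((i:ℕ)+1) := by
    rw [show (((i:ℕ):ℤ)+1) = (((i:ℕ)+1 : ℕ):ℤ) by push_cast; ring, sval_eq_V]
  rw [h1, sval_eq_V]

lemma natAbs_toW {n : ℕ} (p : Equiv.Perm (Fin n) × (Fin n → Bool)) (i : Fin n) :
    (toW p i).natAbs = (p.1 i : ℕ) + 1 := by
  rw [toW_apply]
  cases hb : p.2 i <;> simp <;> omega

lemma SPw_toW {n : ℕ} (p : Equiv.Perm (Fin n) × (Fin n → Bool)) : SPw (toW p) := by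
  constructor
  · intro i
    rw [natAbs_toW]
    have := (p.1 i).isLt
    omega
  · intro i j hij
    simp only [natAbs_toW] at hij
    have : p.1 i = p.1 j := Fin.ext (by omega)
    exact p.1.injective this

lemma toW_injective {n : ℕ} : Function.Injective (toW (n := n)) := by
  intro p q h
  have habs : ∀ i, (p.1 i : ℕ) = (q.1 i : ℕ) := by
    intro i
    have := congrFun h i
    have h1 := natAbs_toW p i
    have h2 := natAbs_toW q i
    rw [this] at h1
    omega
  have hperm : p.1 = q.1 := Equiv.ext (fun i => Fin.ext (habs i))
  have hsign : p.2 = q.2 := by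
    funext i
    have hv := congrFun h i
    rw [toW_apply, toW_apply, habs i] at hv
    cases hb : p.2 i <;> cases hc : q.2 i <;> rw [hb, hc] at hv <;> first
      | rfl
      | (exfalso; simp at hv; omega)
  exact Prod.ext hperm hsign

lemma mem_WAll {n : ℕ} (w : Fin n → ℤ) : w ∈ WAll n ↔ SPw w := by
  constructor
  · intro h
    obtain ⟨p, _, rfl⟩ := Finset.mem_image.mp h
    exact SPw_toW p
  · rintro ⟨h1, h2⟩
    have hf : ∀ i : Fin n, (w i).natAbs - 1 < n := by
      intro i; have := h1 i; omega
    set f : Fin n → Fin n := fun i => ⟨(w i).natAbs - 1, hf i⟩ with hfdef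
    have hinj : Function.Injective f := by
      intro i j hij
      apply h2
      have := Fin.mk.inj_iff.mp hij
      have hi := h1 i; have hj := h1 j
      simp only
      omega
    have hbij : Function.Bijective f := Finite.injective_iff_bijective.mp hinj
    set σ := Equiv.ofBijective f hbij
    refine Finset.mem_image.mpr ⟨(σ, fun i => decide (w i < 0)), Finset.mem_univ _, ?_⟩
    funext i
    rw [toW_apply]
    have hσ : ((σ, fun i => decide (w i < 0)).1 i : ℕ) = (w i).natAbs - 1 := rfl
    have h1i := h1 i
    by_cases hneg : w i < 0
    · rw [show (σ, fun i => decide (w i < 0)).2 i = true by simp [hneg], if_pos rfl]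
      omega
    · rw [show (σ, fun i => decide (w i < 0)).2 i = false by simp [hneg], if_neg (by simp)]
      omega

lemma mem_Wset {n : ℕ} (w : Fin n → ℤ) (k : ℤ) :
    w ∈ Wset n k ↔ SPw w ∧ V w 1 = k := by
  unfold Wset
  rw [Finset.mem_filter, mem_WAll]

lemma BpolyA (n : ℕ) (k : ℤ) : Bpoly n k = ∑ w ∈ Wset n k, (X:ℝ[X]) ^ desW w := by
  unfold Bpoly Wset WAll
  rw [Finset.filter_image]
  rw [Finset.sum_image (fun p _ q _ h => toW_injective h)]
  apply Finset.sum_congr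
  · apply Finset.filter_congr
    intro p _
    have : sval p 1 = V (toW p) 1 := by
      have := sval_eq_V p 1
      norm_num at this
      exact this
    rw [this]
  · intro p _
    rw [desB_eq_desW]

lemma desW_le {n : ℕ} (w : Fin n → ℤ) : desW w ≤ n := by
  unfold desW
  calc _ ≤ (Finset.univ : Finset (Fin n)).card := Finset.card_le_card (Finset.filter_subset _ _)
  _ = n := by simp

lemma V_natAbs_le {n : ℕ} {w : Fin n → ℤ} (h : SPw w) (j : ℕ) : (V w j).natAbs ≤ n := by
  unfold V
  split
  · exact (h.1 _).2
  · simp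

lemma V_in_range {n : ℕ} (w : Fin n → ℤ) (j : ℕ) (h1 : 1 ≤ j) (h2 : j - 1 < n) :
    V w j = w ⟨j - 1, h2⟩ := by
  unfold V
  rw [dif_pos ⟨h1, by omega⟩]

lemma V_out_range {n : ℕ} (w : Fin n → ℤ) (j : ℕ) (h : ¬ (1 ≤ j ∧ j ≤ n)) :
    V w j = 0 := by
  unfold V
  rw [dif_neg h]

lemma V_adj_ne {n : ℕ} {w : Fin n → ℤ} (h : SPw w) (i : Fin n) :
    V w ((i:ℕ)+1) ≠ V w (i:ℕ) := by
  have hlt := i.isLt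
  have hm1 : ((i:ℕ)+1) - 1 < n := by omega
  have hV1 : V w ((i:ℕ)+1) = w ⟨(i:ℕ)+1-1, hm1⟩ := V_in_range w _ (by omega) hm1
  rcases Nat.eq_zero_or_pos (i:ℕ) with h0 | h1
  · have hV0 : V w (i:ℕ) = 0 := V_out_range w _ (by omega)
    rw [hV0, hV1]
    have := (h.1 ⟨(i:ℕ)+1-1, hm1⟩).1
    omega
  · have hm2 : (i:ℕ) - 1 < n := by omega
    have hV2 : V w (i:ℕ) = w ⟨(i:ℕ)-1, hm2⟩ := V_in_range w _ (by omega) hm2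
    rw [hV1, hV2]
    intro hEq
    have h3 := h.2 (congrArg Int.natAbs hEq)
    have h4 := Fin.mk.inj_iff.mp h3
    omega

lemma V_neg {n : ℕ} (w : Fin n → ℤ) (j : ℕ) : V (fun i => -(w i)) j = -(V w j) := by
  unfold V
  split <;> simp

lemma SPw_neg {n : ℕ} {w : Fin n → ℤ} (h : SPw w) : SPw (fun i => -(w i)) := by
  constructor
  · intro i; simpa using h.1 i
  · intro i j hij
    apply h.2
    simpa using hij

lemma desW_neg {n : ℕ} {w : Fin n → ℤ} (h : SPw w) :
    desW (fun i => -(w i)) = n - desW w := by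
  unfold desW
  have hcongr : Finset.univ.filter
        (fun i : Fin n => V (fun i => -(w i)) ((i:ℕ)+1) < V (fun i => -(w i)) (i:ℕ))
      = Finset.univ.filter (fun i : Fin n => ¬ (V w ((i:ℕ)+1) < V w (i:ℕ))) := by
    apply Finset.filter_congr
    intro i _
    rw [V_neg, V_neg]
    constructor
    · intro hlt hlt'
      omega
    · intro hnlt
      have hne := V_adj_ne h i
      omega
  rw [hcongr, Finset.filter_not, Finset.card_sdiff_of_subset (Finset.filter_subset _ _)]
  simp

lemma R_lemma (n : ℕ) (k : ℤ) : Bpoly n (-k) = reflect n (Bpoly n k) := by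
  rw [BpolyA n k, BpolyA n (-k)]
  have hrefl : reflect n (∑ w ∈ Wset n k, (X:ℝ[X]) ^ desW w)
      = ∑ w ∈ Wset n k, (X:ℝ[X]) ^ (n - desW w) := by
    induction (Wset n k) using Finset.induction_on with
    | empty => simp [reflect_zero]
    | insert _ _ hnot ih =>
        rename_i a s
        rw [Finset.sum_insert hnot, Finset.sum_insert hnot, reflect_add, ih,
          reflect_monomial, revAt_le (desW_le a)]
  rw [hrefl]
  apply Finset.sum_nbij' (fun w => fun i => -(w i)) (fun w => fun i => -(w i))
  · intro w hw
    rw [mem_Wset] at hw ⊢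
    refine ⟨SPw_neg hw.1, by rw [V_neg, hw.2]; ring⟩
  · intro w hw
    rw [mem_Wset] at hw ⊢
    refine ⟨SPw_neg hw.1, by rw [V_neg, hw.2]⟩
  · intro w _; funext i; simp
  · intro w _; funext i; simp
  · intro w hw
    rw [mem_Wset] at hw
    rw [desW_neg hw.1]
    congr 1
    have := desW_le w
    omega

/-! ### Insertion of the new maximal letter -/

def xval (n : ℕ) (s : Bool) : ℤ := if s then -((n:ℤ)+1) else (n:ℤ)+1

lemma xval_natAbs (n : ℕ) (s : Bool) : (xval n s).natAbs = n+1 := by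
  cases s <;> simp [xval] <;> omega

def insW {n : ℕ} (w : Fin n → ℤ) (j : Fin n) (s : Bool) : Fin (n+1) → ℤ :=
  Fin.insertNth j.succ (xval n s) w

lemma V_insW_low {n : ℕ} (w : Fin n → ℤ) (j : Fin n) (s : Bool) {m : ℕ}
    (hm : m ≤ (j:ℕ)+1) : V (insW w j s) m = V w m := by
  rcases Nat.eq_zero_or_pos m with h0 | h1
  · subst h0
    rw [V_out_range _ _ (by omega), V_out_range _ _ (by omega)]
  have hjn := j.isLt
  have hm1 : m - 1 < n + 1 := by omega
  have hm1' : m - 1 < n := by omega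
  rw [V_in_range _ m (by omega) hm1, V_in_range w m (by omega) hm1']
  have hidx : (⟨m-1, hm1⟩ : Fin (n+1)) = j.succ.succAbove ⟨m-1, hm1'⟩ := by
    rw [Fin.succAbove_of_castSucc_lt _ _ (by
      rw [Fin.lt_def]
      simp only [Fin.coe_castSucc, Fin.val_succ]
      omega)]
    apply Fin.ext
    simp
  rw [hidx]
  unfold insW
  rw [Fin.insertNth_apply_succAbove]

lemma V_insW_pivot {n : ℕ} (w : Fin n → ℤ) (j : Fin n) (s : Bool) :
    V (insW w j s) ((j:ℕ)+2) = xval n s := by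
  have hjn := j.isLt
  have h : (j:ℕ)+2-1 < n+1 := by omega
  rw [V_in_range _ _ (by omega) h]
  have hidx : (⟨(j:ℕ)+2-1, h⟩ : Fin (n+1)) = j.succ := by
    apply Fin.ext
    simp only [Fin.val_succ]
    omega
  rw [hidx]
  unfold insW
  rw [Fin.insertNth_apply_same]

lemma V_insW_high {n : ℕ} (w : Fin n → ℤ) (j : Fin n) (s : Bool) {m : ℕ}
    (h3 : (j:ℕ)+3 ≤ m) (hn : m ≤ n+1) : V (insW w j s) m = V w (m-1) := by
  have hjn := j.isLt
  have hm1 : m - 1 < n+1 := by omega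
  have hl : m - 2 < n := by omega
  rw [V_in_range _ m (by omega) hm1, V_in_range w (m-1) (by omega) (by omega : m-1-1 < n)]
  have hidx : (⟨m-1, hm1⟩ : Fin (n+1)) = j.succ.succAbove ⟨m-2, hl⟩ := by
    rw [Fin.succAbove_of_le_castSucc _ _ (by
      rw [Fin.le_def]
      simp only [Fin.coe_castSucc, Fin.val_succ]
      omega)]
    apply Fin.ext
    simp only [Fin.val_succ]
    omega
  rw [hidx]
  unfold insW
  rw [Fin.insertNth_apply_succAbove]
  exact congrArg w (Fin.ext (by simp only []; omega))

lemma insW_apply_cases {n : ℕ} (w : Fin n → ℤ) (j : Fin n) (s : Bool) (i : Fin (n+1)) :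
    (insW w j s i = xval n s ∧ i = j.succ)
      ∨ ∃ l, i = j.succ.succAbove l ∧ insW w j s i = w l := by
  rcases eq_or_ne i j.succ with rfl | hne
  · left
    exact ⟨Fin.insertNth_apply_same _ _ _, rfl⟩
  · right
    obtain ⟨l, hl⟩ := Fin.exists_succAbove_eq hne
    refine ⟨l, hl.symm, ?_⟩
    rw [← hl]
    exact Fin.insertNth_apply_succAbove _ _ _ _

lemma SPw_insW {n : ℕ} {w : Fin n → ℤ} (hS : SPw w) (j : Fin n) (s : Bool) :
    SPw (insW w j s) := by
  constructor
  · intro i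
    rcases insW_apply_cases w j s i with ⟨hv, _⟩ | ⟨l, _, hv⟩
    · rw [hv, xval_natAbs]; omega
    · rw [hv]; have := hS.1 l; omega
  · intro a b hab
    have hab' : (insW w j s a).natAbs = (insW w j s b).natAbs := hab
    rcases insW_apply_cases w j s a with ⟨hva, ha⟩ | ⟨la, ha, hva⟩ <;>
      rcases insW_apply_cases w j s b with ⟨hvb, hb⟩ | ⟨lb, hb, hvb⟩
    · rw [ha, hb]
    · exfalso
      rw [hva, hvb, xval_natAbs] at hab'
      have := hS.1 lb
      omega
    · exfalso
      rw [hva, hvb, xval_natAbs] at hab'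
      have := hS.1 la
      omega
    · have hl : la = lb := by
        apply hS.2
        show (w la).natAbs = (w lb).natAbs
        rw [← hva, ← hvb, hab']
      rw [ha, hb, hl]

lemma insW_mem {n : ℕ} {w : Fin n → ℤ} {k : ℤ} (hw : w ∈ Wset n k) (j : Fin n) (s : Bool) :
    insW w j s ∈ Wset (n+1) k := by
  rw [mem_Wset] at hw ⊢
  exact ⟨SPw_insW hw.1 j s, by rw [V_insW_low w j s (by omega), hw.2]⟩

lemma desW_eq_sum {m : ℕ} (w : Fin m → ℤ) :
    desW w = ∑ i : Fin m, (if V w ((i:ℕ)+1) < V w (i:ℕ) then 1 else 0) := by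
  unfold desW
  rw [Finset.card_filter]

lemma sum_succAbove_eval {n : ℕ} {w : Fin n → ℤ} (hS : SPw w) (j : Fin n) (s : Bool)
    (l : Fin n) :
    (if V (insW w j s) (((j.succ.succAbove l : Fin (n+1)) : ℕ)+1)
          < V (insW w j s) ((j.succ.succAbove l : Fin (n+1)) : ℕ) then (1:ℕ) else 0)
      = if (l:ℕ) = (j:ℕ)+1 then (if s then 0 else 1)
          else (if V w ((l:ℕ)+1) < V w (l:ℕ) then 1 else 0) := by
  have hln := l.isLt
  have hjn := j.isLt
  rcases lt_trichotomy (l:ℕ) ((j:ℕ)+1) with hlt | heq | hgt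
  · have hsA : j.succ.succAbove l = Fin.castSucc l :=
      Fin.succAbove_of_castSucc_lt _ _ (by
        rw [Fin.lt_def]; simp only [Fin.coe_castSucc, Fin.val_succ]; omega)
    rw [hsA]
    simp only [Fin.coe_castSucc]
    rw [if_neg (show ¬((l:ℕ) = (j:ℕ)+1) by omega)]
    simp only [V_insW_low w j s (show (l:ℕ)+1 ≤ (j:ℕ)+1 by omega),
      V_insW_low w j s (show (l:ℕ) ≤ (j:ℕ)+1 by omega)]
  · have hsA : j.succ.succAbove l = l.succ :=
      Fin.succAbove_of_le_castSucc _ _ (by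
        rw [Fin.le_def]; simp only [Fin.coe_castSucc, Fin.val_succ]; omega)
    rw [hsA, if_pos heq]
    simp only [Fin.val_succ]
    have e1 : V (insW w j s) ((l:ℕ)+1+1) = V w ((j:ℕ)+2) := by
      rw [show (l:ℕ)+1+1 = (j:ℕ)+3 by omega, V_insW_high w j s (by omega) (by omega),
        show (j:ℕ)+3-1 = (j:ℕ)+2 by omega]
    have e2 : V (insW w j s) ((l:ℕ)+1) = xval n s := by
      rw [show (l:ℕ)+1 = (j:ℕ)+2 by omega, V_insW_pivot]
    simp only [e1, e2]
    have hb := V_natAbs_le hS ((j:ℕ)+2)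
    cases s
    · rw [if_pos (show V w ((j:ℕ)+2) < xval n false by simp [xval]; omega)]
      simp
    · rw [if_neg (show ¬(V w ((j:ℕ)+2) < xval n true) by simp [xval]; omega)]
      simp
  · have hsA : j.succ.succAbove l = l.succ :=
      Fin.succAbove_of_le_castSucc _ _ (by
        rw [Fin.le_def]; simp only [Fin.coe_castSucc, Fin.val_succ]; omega)
    rw [hsA]
    simp only [Fin.val_succ]
    rw [if_neg (show ¬((l:ℕ) = (j:ℕ)+1) by omega)]
    have e1 : V (insW w j s) ((l:ℕ)+1+1) = V w ((l:ℕ)+1) := by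
      rw [V_insW_high w j s (by omega) (by omega), show (l:ℕ)+1+1-1 = (l:ℕ)+1 by omega]
    have e2 : V (insW w j s) ((l:ℕ)+1) = V w (l:ℕ) := by
      rw [V_insW_high w j s (by omega) (by omega), show (l:ℕ)+1-1 = (l:ℕ) by omega]
    simp only [e1, e2]

lemma pivot_eval {n : ℕ} {w : Fin n → ℤ} (hS : SPw w) (j : Fin n) (s : Bool) :
    (if V (insW w j s) (((j.succ : Fin (n+1)) : ℕ)+1)
          < V (insW w j s) ((j.succ : Fin (n+1)) : ℕ) then (1:ℕ) else 0)
      = if s then 1 else 0 := by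
  have hb := V_natAbs_le hS ((j:ℕ)+1)
  simp only [Fin.val_succ]
  have e1 : V (insW w j s) ((j:ℕ)+1+1) = xval n s := by
    rw [show (j:ℕ)+1+1 = (j:ℕ)+2 by omega, V_insW_pivot]
  have e2 : V (insW w j s) ((j:ℕ)+1) = V w ((j:ℕ)+1) :=
    V_insW_low w j s (by omega)
  simp only [e1, e2]
  cases s
  · rw [if_neg (show ¬(xval n false < V w ((j:ℕ)+1)) by simp [xval]; omega)]
    simp
  · rw [if_pos (show xval n true < V w ((j:ℕ)+1) by simp [xval]; omega)]
    simp

lemma desW_insW_last {n : ℕ} {w : Fin n → ℤ} (hS : SPw w) (j : Fin n)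
    (hj : (j:ℕ)+1 = n) (s : Bool) :
    desW (insW w j s) = desW w + (if s then 1 else 0) := by
  have hcongr : (∑ l : Fin n, if (l:ℕ) = (j:ℕ)+1 then (if s then 0 else 1)
          else (if V w ((l:ℕ)+1) < V w (l:ℕ) then 1 else 0))
        = ∑ l : Fin n, (if V w ((l:ℕ)+1) < V w (l:ℕ) then (1:ℕ) else 0) :=
    Finset.sum_congr rfl (fun l _ => by
      rw [if_neg (show ¬((l:ℕ) = (j:ℕ)+1) by have := l.isLt; omega)])
  rw [desW_eq_sum, Fin.sum_univ_succAbove _ j.succ, pivot_eval hS j s,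
    Finset.sum_congr rfl (fun l _ => sum_succAbove_eval hS j s l), hcongr,
    ← desW_eq_sum]
  ring

lemma desW_insW_mid {n : ℕ} {w : Fin n → ℤ} (hS : SPw w) (j : Fin n)
    (hj : (j:ℕ)+1 < n) (s : Bool) :
    desW (insW w j s) + (if V w ((j:ℕ)+2) < V w ((j:ℕ)+1) then 1 else 0)
      = desW w + 1 := by
  rw [desW_eq_sum, Fin.sum_univ_succAbove _ j.succ, pivot_eval hS j s,
    Finset.sum_congr rfl (fun l _ => sum_succAbove_eval hS j s l)]
  set l₁ : Fin n := ⟨(j:ℕ)+1, hj⟩ with hl₁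
  have herase : ∀ l ∈ Finset.univ.erase l₁,
      (if (l:ℕ) = (j:ℕ)+1 then (if s then 0 else 1)
        else (if V w ((l:ℕ)+1) < V w (l:ℕ) then 1 else 0))
      = (if V w ((l:ℕ)+1) < V w (l:ℕ) then (1:ℕ) else 0) := by
    intro l hl
    rw [if_neg (fun hc => (Finset.ne_of_mem_erase hl) (Fin.ext hc))]
  rw [← Finset.add_sum_erase _ _ (Finset.mem_univ l₁),
    Finset.sum_congr rfl herase, if_pos rfl]
  have hw : desW w = (if V w ((j:ℕ)+2) < V w ((j:ℕ)+1) then 1 else 0)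
      + ∑ l ∈ Finset.univ.erase l₁, (if V w ((l:ℕ)+1) < V w (l:ℕ) then (1:ℕ) else 0) := by
    rw [desW_eq_sum w, ← Finset.add_sum_erase _ _ (Finset.mem_univ l₁)]
  rw [hw]
  by_cases hC : V w ((j:ℕ)+2) < V w ((j:ℕ)+1) <;> cases s <;> simp [hC] <;> omega

lemma desW_lt {n : ℕ} {w : Fin n → ℤ} {k : ℤ} (hn : 1 ≤ n) (hk : 1 ≤ k) (hV : V w 1 = k) :
    desW w + 1 ≤ n := by
  have hV0 : V w 0 = 0 := V_out_range w 0 (by omega)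
  have hsub : Finset.univ.filter (fun i : Fin n => V w ((i:ℕ)+1) < V w (i:ℕ))
      ⊆ Finset.univ.erase ⟨0, by omega⟩ := by
    intro i hi
    rw [Finset.mem_filter] at hi
    rw [Finset.mem_erase]
    refine ⟨?_, Finset.mem_univ _⟩
    intro h0
    rw [h0] at hi
    have hc : V w ((0:ℕ)+1) < V w ((0:ℕ)) := hi.2
    rw [hV0] at hc
    norm_num at hc
    omega
  have hcard := Finset.card_le_card hsub
  rw [Finset.card_erase_of_mem (Finset.mem_univ _), Finset.card_univ, Fintype.card_fin] at hcard
  unfold desW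
  omega

lemma inner_sum {n : ℕ} (hn : 1 ≤ n) {w : Fin n → ℤ} {k : ℤ} (hk : 1 ≤ k)
    (hS : SPw w) (hV : V w 1 = k) :
    ∑ q ∈ (Finset.univ : Finset (Fin n × Bool)), (X:ℝ[X]) ^ desW (insW w q.1 q.2)
      = C (2*(desW w : ℝ)+1) * X^(desW w)
        + C (2*((n:ℝ)+1)-3-2*(desW w : ℝ)) * X^(desW w + 1) := by
  obtain ⟨m, rfl⟩ : ∃ m, n = m+1 := ⟨n-1, by omega⟩
  set d := desW w with hd
  have hd1 : d + 1 ≤ m + 1 := desW_lt hn hk hV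
  set h : Fin (m+1) → ℝ[X] :=
    fun i => if V w ((i:ℕ)+1) < V w (i:ℕ) then X^d else X^(d+1) with hh
  have hzero : h 0 = X^(d+1) := by
    rw [hh]
    simp only [Fin.val_zero]
    exact if_neg (by rw [V_out_range w 0 (by omega)]; simp only [Nat.zero_add]; omega)
  have hcount : ∑ i : Fin (m+1), h i = d • (X:ℝ[X])^d + (m+1-d) • (X:ℝ[X])^(d+1) := by
    rw [hh, Finset.sum_ite, Finset.sum_const, Finset.sum_const, Finset.filter_not,
      Finset.card_sdiff_of_subset (Finset.filter_subset _ _)]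
    have hcd : (Finset.univ.filter (fun i : Fin (m+1) => V w ((i:ℕ)+1) < V w (i:ℕ))).card = d := rfl
    rw [hcd]
    simp
  have hmid : ∀ j : Fin m,
      (X:ℝ[X]) ^ desW (insW w (Fin.castSucc j) false) + X ^ desW (insW w (Fin.castSucc j) true)
        = 2 * h j.succ := by
    intro j
    have hjm := j.isLt
    have hcoe : ((Fin.castSucc j : Fin (m+1)):ℕ) = (j:ℕ) := rfl
    have hmlt : ((Fin.castSucc j : Fin (m+1)):ℕ)+1 < m+1 := by rw [hcoe]; omega
    have hf := desW_insW_mid hS (Fin.castSucc j) hmlt false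
    have ht := desW_insW_mid hS (Fin.castSucc j) hmlt true
    rw [hcoe] at hf ht
    have hhs : h j.succ = if V w ((j:ℕ)+2) < V w ((j:ℕ)+1) then X^d else X^(d+1) := by
      have hj2 : ((j:ℕ)+1+1) = (j:ℕ)+2 := by omega
      rw [hh]
      simp only [Fin.val_succ, hj2]
    by_cases hC : V w ((j:ℕ)+2) < V w ((j:ℕ)+1)
    · rw [if_pos hC] at hf ht
      have e1 : desW (insW w (Fin.castSucc j) false) = d := by omega
      have e2 : desW (insW w (Fin.castSucc j) true) = d := by omega
      rw [e1, e2, hhs, if_pos hC]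
      ring
    · rw [if_neg hC] at hf ht
      have e1 : desW (insW w (Fin.castSucc j) false) = d+1 := by omega
      have e2 : desW (insW w (Fin.castSucc j) true) = d+1 := by omega
      rw [e1, e2, hhs, if_neg hC]
      ring
  have hlastv : ((Fin.last m : Fin (m+1)):ℕ)+1 = m+1 := by simp
  have hlast : (X:ℝ[X]) ^ desW (insW w (Fin.last m) false) + X ^ desW (insW w (Fin.last m) true)
      = X^d + X^(d+1) := by
    rw [desW_insW_last hS _ hlastv false, desW_insW_last hS _ hlastv true]
    norm_num [← hd]
  have hs1 : ∀ j : Fin (m+1), ∑ s : Bool, (X:ℝ[X]) ^ desW (insW w j s)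
      = (X:ℝ[X]) ^ desW (insW w j false) + X ^ desW (insW w j true) := by
    intro j
    rw [Fintype.sum_bool]
    ring
  have hA : ∑ q ∈ (Finset.univ : Finset (Fin (m+1) × Bool)), (X:ℝ[X]) ^ desW (insW w q.1 q.2)
      = (∑ j : Fin m, 2 * h j.succ) + (X^d + X^(d+1)) := by
    rw [Fintype.sum_prod_type]
    rw [Finset.sum_congr rfl (fun j _ => hs1 j)]
    rw [Fin.sum_univ_castSucc]
    rw [Finset.sum_congr rfl (fun (j : Fin m) _ => hmid j), hlast]
  have hB : h 0 + ∑ j : Fin m, h j.succ = ∑ i : Fin (m+1), h i := (Fin.sum_univ_succ h).symm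
  rw [hA, ← Finset.mul_sum]
  have hBsub : ∑ j : Fin m, h j.succ = (d • (X:ℝ[X])^d + (m+1-d) • (X:ℝ[X])^(d+1)) - X^(d+1) := by
    rw [← hcount, ← hB, hzero]
    ring
  rw [hBsub, nsmul_eq_mul, nsmul_eq_mul]
  push_cast
  rw [Nat.cast_sub (by omega : d ≤ m+1)]
  push_cast
  simp only [map_sub, map_add, map_mul, map_one, map_ofNat, map_natCast]
  ring

noncomputable def maxIdx {n : ℕ} (w : Fin (n+1) → ℤ) : Fin (n+1) :=
  if h : ∃ i, (w i).natAbs = n+1 then h.choose else 0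

lemma exists_max {n : ℕ} {w : Fin (n+1) → ℤ} (h : SPw w) : ∃ i, (w i).natAbs = n+1 := by
  have hf : ∀ i : Fin (n+1), (w i).natAbs - 1 < n+1 := by
    intro i; have := h.1 i; omega
  set f : Fin (n+1) → Fin (n+1) := fun i => ⟨(w i).natAbs - 1, hf i⟩ with hfdef
  have hinj : Function.Injective f := by
    intro i j hij
    apply h.2
    have := Fin.mk.inj_iff.mp hij
    have hi := h.1 i; have hj := h.1 j
    simp only
    omega
  obtain ⟨i, hi⟩ := (Finite.injective_iff_surjective.mp hinj) ⟨n, by omega⟩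
  refine ⟨i, ?_⟩
  have := Fin.mk.inj_iff.mp hi
  have := h.1 i
  omega

lemma maxIdx_spec {n : ℕ} {w : Fin (n+1) → ℤ} (h : SPw w) :
    (w (maxIdx w)).natAbs = n+1 := by
  unfold maxIdx
  rw [dif_pos (exists_max h)]
  exact (exists_max h).choose_spec

lemma maxIdx_unique {n : ℕ} {w : Fin (n+1) → ℤ} (h : SPw w) {i : Fin (n+1)}
    (hi : (w i).natAbs = n+1) : i = maxIdx w := by
  apply h.2
  show (w i).natAbs = (w (maxIdx w)).natAbs
  rw [hi, maxIdx_spec h]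

lemma step_lemma {n : ℕ} (hn : 1 ≤ n) {k : ℕ} (hk : 1 ≤ k) (hkn : k ≤ n) :
    Bpoly (n+1) (k:ℤ) = Top (n+1) (Bpoly n (k:ℤ)) := by
  haveI : NeZero n := ⟨by omega⟩
  rw [BpolyA, BpolyA, Top_sum]
  have hbij : ∑ p ∈ (Wset n (k:ℤ)) ×ˢ (Finset.univ : Finset (Fin n × Bool)),
        (X:ℝ[X]) ^ desW (insW p.1 p.2.1 p.2.2)
      = ∑ w' ∈ Wset (n+1) (k:ℤ), (X:ℝ[X]) ^ desW w' := by
    apply Finset.sum_nbij' (fun p => insW p.1 p.2.1 p.2.2)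
      (fun w' => (Fin.removeNth (maxIdx w') w',
        (⟨(maxIdx w').val - 1, by have := (maxIdx w').isLt; omega⟩,
          decide (w' (maxIdx w') < 0))))
    · intro p hp
      rw [Finset.mem_product] at hp
      exact insW_mem hp.1 p.2.1 p.2.2
    · intro w' hw'
      rw [mem_Wset] at hw'
      obtain ⟨hS, hV⟩ := hw'
      have hmax := maxIdx_spec hS
      have hne0 : maxIdx w' ≠ 0 := by
        intro h0
        have h1 : V w' 1 = w' ⟨0, by omega⟩ := V_in_range w' 1 (by omega) (by omega)
        have : w' (maxIdx w') = (k:ℤ) := by rw [h0]; rw [h1] at hV; exact hV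
        rw [this] at hmax
        omega
      rw [Finset.mem_product, mem_Wset]
      refine ⟨⟨⟨?_, ?_⟩, ?_⟩, Finset.mem_univ _⟩
      · intro l
        show 1 ≤ (w' ((maxIdx w').succAbove l)).natAbs ∧ (w' ((maxIdx w').succAbove l)).natAbs ≤ n
        have hb := hS.1 ((maxIdx w').succAbove l)
        have hne : ((maxIdx w').succAbove l) ≠ maxIdx w' := Fin.succAbove_ne _ _
        have hnot : (w' ((maxIdx w').succAbove l)).natAbs ≠ n+1 := by
          intro hcon
          exact hne (maxIdx_unique hS hcon)
        omega
      · intro a b hab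
        have hab' : (w' ((maxIdx w').succAbove a)).natAbs
            = (w' ((maxIdx w').succAbove b)).natAbs := hab
        have := hS.2 hab'
        exact Fin.succAbove_right_injective this
      · have h0 : (maxIdx w').succAbove 0 = 0 := Fin.succAbove_ne_zero_zero hne0
        have hr : V (Fin.removeNth (maxIdx w') w') 1
            = w' ((maxIdx w').succAbove ⟨0, by omega⟩) :=
          V_in_range _ 1 (by omega) (by omega)
        rw [hr, show (⟨0, by omega⟩ : Fin n) = (0 : Fin n) from rfl, h0]
        have h1 : V w' 1 = w' ⟨0, by omega⟩ := V_in_range w' 1 (by omega) (by omega)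
        rw [h1] at hV
        exact hV
    · intro p hp
      rw [Finset.mem_product, mem_Wset] at hp
      obtain ⟨⟨hS, hV⟩, -⟩ := hp
      obtain ⟨w, j, s⟩ := p
      have hSi : SPw (insW w j s) := SPw_insW hS j s
      have hmax : maxIdx (insW w j s) = j.succ := by
        symm
        apply maxIdx_unique hSi
        show (insW w j s j.succ).natAbs = n+1
        unfold insW
        rw [Fin.insertNth_apply_same, xval_natAbs]
      simp only [hmax]
      refine Prod.ext ?_ (Prod.ext ?_ ?_)
      · show Fin.removeNth j.succ (insW w j s) = w
        funext l
        unfold Fin.removeNth insW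
        rw [Fin.insertNth_apply_succAbove]
      · show (⟨(j.succ.val) - 1, _⟩ : Fin n) = j
        apply Fin.ext
        simp
      · show decide (insW w j s j.succ < 0) = s
        unfold insW
        rw [Fin.insertNth_apply_same]
        cases s <;> simp [xval] <;> omega
    · intro w' hw'
      rw [mem_Wset] at hw'
      obtain ⟨hS, hV⟩ := hw'
      have hmax := maxIdx_spec hS
      have hne0 : maxIdx w' ≠ 0 := by
        intro h0
        have h1 : V w' 1 = w' ⟨0, by omega⟩ := V_in_range w' 1 (by omega) (by omega)
        have : w' (maxIdx w') = (k:ℤ) := by rw [h0]; rw [h1] at hV; exact hV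
        rw [this] at hmax
        omega
      show insW (Fin.removeNth (maxIdx w') w') _ _ = w'
      unfold insW
      have hsucc : (⟨(maxIdx w').val - 1, by have := (maxIdx w').isLt; omega⟩ : Fin n).succ
          = maxIdx w' := by
        apply Fin.ext
        simp only [Fin.val_succ]
        have hv0 : (maxIdx w').val ≠ 0 := fun hc => hne0 (Fin.ext hc)
        omega
      rw [hsucc]
      have hx : xval n (decide (w' (maxIdx w') < 0)) = w' (maxIdx w') := by
        by_cases hneg : w' (maxIdx w') < 0
        · rw [show decide (w' (maxIdx w') < 0) = true by simpa using hneg]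
          show -((n:ℤ)+1) = w' (maxIdx w')
          omega
        · rw [show decide (w' (maxIdx w') < 0) = false by simpa using hneg]
          show ((n:ℤ)+1) = w' (maxIdx w')
          omega
      rw [hx]
      exact Fin.insertNth_self_removeNth _ _
    · intro p hp
      rfl
  rw [← hbij, Finset.sum_product]
  apply Finset.sum_congr rfl
  intro w hw
  rw [mem_Wset] at hw
  rw [inner_sum hn (by exact_mod_cast hk : (1:ℤ) ≤ (k:ℤ)) hw.1 hw.2, Top_monomial]
  congr 2
  all_goals push_cast
  all_goals ring

/-! ### The top case: first letter equal to the maximum -/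

lemma V_cons_zero {n : ℕ} (x : ℤ) (τ : Fin n → ℤ) :
    V (Fin.cons x τ : Fin (n+1) → ℤ) 1 = x := by
  rw [V_in_range _ 1 (by omega) (by omega)]
  rw [show (⟨1-1, by omega⟩ : Fin (n+1)) = 0 from rfl]
  simp

lemma V_cons_succ {n : ℕ} (x : ℤ) (τ : Fin n → ℤ) {m : ℕ} (h1 : 1 ≤ m) (h2 : m ≤ n) :
    V (Fin.cons x τ : Fin (n+1) → ℤ) (m+1) = V τ m := by
  rw [V_in_range _ (m+1) (by omega) (by omega), V_in_range τ m h1 (by omega)]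
  have hidx : (⟨m+1-1, by omega⟩ : Fin (n+1)) = Fin.succ ⟨m-1, by omega⟩ := by
    apply Fin.ext
    simp only [Fin.val_succ]
    omega
  rw [hidx, Fin.cons_succ]

lemma desW_cons {n : ℕ} (hn : 1 ≤ n) {τ : Fin n → ℤ} (hS : SPw τ) :
    desW (Fin.cons ((n:ℤ)+1) τ : Fin (n+1) → ℤ)
      = desW τ + (if 0 < V τ 1 then 1 else 0) := by
  obtain ⟨m, rfl⟩ : ∃ m, n = m+1 := ⟨n-1, by omega⟩
  set x : ℤ := ((m+1 : ℕ) : ℤ) + 1 with hx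
  have hxbig : ∀ j : ℕ, V τ j < x := by
    intro j
    have := V_natAbs_le hS j
    omega
  have hτ1 : V τ 1 ≠ 0 := by
    have : V τ 1 = τ ⟨0, by omega⟩ := V_in_range τ 1 (by omega) (by omega)
    have hb := hS.1 ⟨0, by omega⟩
    omega
  rw [desW_eq_sum, Fin.sum_univ_succ, Fin.sum_univ_succ, desW_eq_sum, Fin.sum_univ_succ]
  have e0 : (if V (Fin.cons x τ : Fin (m+2) → ℤ) ((0 : Fin (m+2)).val+1)
        < V (Fin.cons x τ : Fin (m+2) → ℤ) ((0 : Fin (m+2)).val) then (1:ℕ) else 0) = 0 := by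
    simp only [Fin.val_zero]
    apply if_neg
    rw [show (0:ℕ)+1 = 1 by omega, V_cons_zero, V_out_range _ 0 (by omega)]
    omega
  have e1 : (if V (Fin.cons x τ : Fin (m+2) → ℤ) (((0 : Fin (m+1)).succ : Fin (m+2)).val+1)
        < V (Fin.cons x τ : Fin (m+2) → ℤ) (((0 : Fin (m+1)).succ : Fin (m+2)).val)
        then (1:ℕ) else 0) = 1 := by
    simp only [Fin.val_succ, Fin.val_zero]
    apply if_pos
    rw [show (0:ℕ)+1+1 = 1+1 by omega, V_cons_succ x τ (by omega) (by omega),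
      show (0:ℕ)+1 = 1 by omega, V_cons_zero]
    exact hxbig 1
  have e2 : ∀ l : Fin m,
      (if V (Fin.cons x τ : Fin (m+2) → ℤ) (((l.succ).succ : Fin (m+2)).val+1)
        < V (Fin.cons x τ : Fin (m+2) → ℤ) (((l.succ).succ : Fin (m+2)).val)
        then (1:ℕ) else 0)
      = (if V τ (((l.succ : Fin (m+1))).val+1) < V τ ((l.succ : Fin (m+1)).val)
        then (1:ℕ) else 0) := by
    intro l
    have hl := l.isLt
    simp only [Fin.val_succ]
    have a1 : V (Fin.cons x τ : Fin (m+2) → ℤ) ((l:ℕ)+1+1+1) = V τ ((l:ℕ)+1+1) :=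
      V_cons_succ x τ (by omega) (by omega)
    have a2 : V (Fin.cons x τ : Fin (m+2) → ℤ) ((l:ℕ)+1+1) = V τ ((l:ℕ)+1) :=
      V_cons_succ x τ (by omega) (by omega)
    simp only [a1, a2]
  rw [e0, e1, Finset.sum_congr rfl (fun l _ => e2 l)]
  have t0 : (if V τ ((0 : Fin (m+1)).val+1) < V τ ((0 : Fin (m+1)).val) then (1:ℕ) else 0)
      = if V τ 1 < 0 then 1 else 0 := by
    simp only [Fin.val_zero, Nat.zero_add, V_out_range τ 0 (by omega : ¬(1 ≤ 0 ∧ 0 ≤ m+1))]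
  rw [t0]
  by_cases hpos : 0 < V τ 1
  · rw [if_pos hpos, if_neg (by omega)]
    ring
  · rw [if_neg hpos, if_pos (by omega)]
    ring

lemma top_count {n : ℕ} (hn : 1 ≤ n) :
    Bpoly (n+1) ((n:ℤ)+1)
      = ∑ τ ∈ WAll n, (X:ℝ[X]) ^ (desW τ + (if 0 < V τ 1 then 1 else 0)) := by
  rw [BpolyA]
  apply Finset.sum_nbij' (fun w' => fun l : Fin n => w' l.succ)
    (fun τ => Fin.cons ((n:ℤ)+1) τ)
  · intro w' hw'
    rw [mem_Wset] at hw'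
    obtain ⟨hS, hV⟩ := hw'
    have hmax0 : (w' (0 : Fin (n+1))).natAbs = n+1 := by
      have : V w' 1 = w' ⟨0, by omega⟩ := V_in_range w' 1 (by omega) (by omega)
      rw [this] at hV
      rw [show (0 : Fin (n+1)) = ⟨0, by omega⟩ from rfl, hV]
      omega
    rw [mem_WAll]
    constructor
    · intro l
      show 1 ≤ (w' l.succ).natAbs ∧ (w' l.succ).natAbs ≤ n
      have hb := hS.1 l.succ
      have hne : (w' l.succ).natAbs ≠ n+1 := by
        intro hcon
        have : l.succ = (0 : Fin (n+1)) := hS.2 (hcon.trans hmax0.symm)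
        exact (Fin.succ_ne_zero l) this
      omega
    · intro a b hab
      have hab' : (w' a.succ).natAbs = (w' b.succ).natAbs := hab
      have := hS.2 hab'
      exact Fin.succ_injective _ this
  · intro τ hτ
    rw [mem_WAll] at hτ
    rw [mem_Wset]
    constructor
    · constructor
      · intro i
        induction i using Fin.cases with
        | zero => rw [Fin.cons_zero]; omega
        | succ l => rw [Fin.cons_succ]; have := hτ.1 l; omega
      · intro a b hab
        induction a using Fin.cases with
        | zero =>
            induction b using Fin.cases with
            | zero => rfl
            | succ lb =>
                exfalso
                have hab' : ((Fin.cons ((n:ℤ)+1) τ : Fin (n+1) → ℤ) 0).natAbs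
                    = ((Fin.cons ((n:ℤ)+1) τ : Fin (n+1) → ℤ) lb.succ).natAbs := hab
                rw [Fin.cons_zero, Fin.cons_succ] at hab'
                have := hτ.1 lb
                omega
        | succ la =>
            induction b using Fin.cases with
            | zero =>
                exfalso
                have hab' : ((Fin.cons ((n:ℤ)+1) τ : Fin (n+1) → ℤ) la.succ).natAbs
                    = ((Fin.cons ((n:ℤ)+1) τ : Fin (n+1) → ℤ) 0).natAbs := hab
                rw [Fin.cons_zero, Fin.cons_succ] at hab'
                have := hτ.1 la
                omega
            | succ lb =>
                have hab' : ((Fin.cons ((n:ℤ)+1) τ : Fin (n+1) → ℤ) la.succ).natAbs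
                    = ((Fin.cons ((n:ℤ)+1) τ : Fin (n+1) → ℤ) lb.succ).natAbs := hab
                rw [Fin.cons_succ, Fin.cons_succ] at hab'
                exact congrArg Fin.succ (hτ.2 hab')
    · rw [V_cons_zero]
  · intro w' hw'
    rw [mem_Wset] at hw'
    obtain ⟨hS, hV⟩ := hw'
    funext i
    induction i using Fin.cases with
    | zero =>
        rw [Fin.cons_zero]
        have hv : V w' 1 = w' ⟨0, by omega⟩ := V_in_range w' 1 (by omega) (by omega)
        rw [hv] at hV
        rw [show (0 : Fin (n+1)) = ⟨0, by omega⟩ from rfl]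
        exact hV.symm
    | succ l => rw [Fin.cons_succ]
  · intro τ hτ
    funext l
    rw [Fin.cons_succ]
  · intro w' hw'
    rw [mem_Wset] at hw'
    obtain ⟨hS, hV⟩ := hw'
    have hcons : w' = Fin.cons ((n:ℤ)+1) (fun l : Fin n => w' l.succ) := by
      funext i
      induction i using Fin.cases with
      | zero =>
          rw [Fin.cons_zero]
          have : V w' 1 = w' ⟨0, by omega⟩ := V_in_range w' 1 (by omega) (by omega)
          rw [this] at hV
          rw [show (0 : Fin (n+1)) = ⟨0, by omega⟩ from rfl, hV]
      | succ l => rw [Fin.cons_succ]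
    have hStail : SPw (fun l : Fin n => w' l.succ) := by
      constructor
      · intro l
        show 1 ≤ (w' l.succ).natAbs ∧ (w' l.succ).natAbs ≤ n
        have hb := hS.1 l.succ
        have hmax0 : (w' (0 : Fin (n+1))).natAbs = n+1 := by
          have : V w' 1 = w' ⟨0, by omega⟩ := V_in_range w' 1 (by omega) (by omega)
          rw [this] at hV
          rw [show (0 : Fin (n+1)) = ⟨0, by omega⟩ from rfl, hV]
          omega
        have hne : (w' l.succ).natAbs ≠ n+1 := by
          intro hcon
          exact (Fin.succ_ne_zero l) (hS.2 (hcon.trans hmax0.symm))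
        omega
      · intro a b hab
        have hab' : (w' a.succ).natAbs = (w' b.succ).natAbs := hab
        exact Fin.succ_injective _ (hS.2 hab')
    conv_lhs => rw [hcons]
    rw [desW_cons hn hStail]

lemma regroup {n : ℕ} (hn : 1 ≤ n) :
    ∑ τ ∈ WAll n, (X:ℝ[X]) ^ (desW τ + (if 0 < V τ 1 then 1 else 0))
      = ∑ k ∈ Finset.Icc (1:ℤ) (n:ℤ), (X * Bpoly n k + Bpoly n (-k)) := by
  have hV1 : ∀ τ ∈ WAll n, 1 ≤ (V τ 1).natAbs ∧ (V τ 1).natAbs ≤ n := by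
    intro τ hτ
    rw [mem_WAll] at hτ
    have h1 : V τ 1 = τ ⟨0, by omega⟩ := V_in_range τ 1 (by omega) (by omega)
    rw [h1]
    exact hτ.1 _
  rw [← Finset.sum_filter_add_sum_filter_not (WAll n) (fun τ => 0 < V τ 1)]
  have hpos : ∑ τ ∈ (WAll n).filter (fun τ => 0 < V τ 1),
        (X:ℝ[X]) ^ (desW τ + (if 0 < V τ 1 then 1 else 0))
      = ∑ k ∈ Finset.Icc (1:ℤ) (n:ℤ), X * Bpoly n k := by
    rw [Finset.sum_congr rfl (fun τ hτ => by
      rw [if_pos (Finset.mem_filter.mp hτ).2])]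
    rw [← Finset.sum_fiberwise_of_maps_to (g := fun τ => V τ 1) (t := Finset.Icc (1:ℤ) (n:ℤ))
      (fun τ hτ => by
        rw [Finset.mem_filter] at hτ
        have h1 := hV1 τ hτ.1
        have h2 := hτ.2
        rw [Finset.mem_Icc]
        show (1:ℤ) ≤ V τ 1 ∧ V τ 1 ≤ (n:ℤ)
        omega)
      (fun τ => (X:ℝ[X]) ^ (desW τ + 1))]
    apply Finset.sum_congr rfl
    intro k hk
    rw [Finset.mem_Icc] at hk
    have hset : ((WAll n).filter (fun τ => 0 < V τ 1)).filter (fun τ => V τ 1 = k)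
        = Wset n k := by
      unfold Wset
      rw [Finset.filter_filter]
      apply Finset.filter_congr
      intro τ _
      constructor
      · rintro ⟨_, h⟩
        exact h
      · intro h
        exact ⟨by omega, h⟩
    rw [hset, BpolyA, Finset.mul_sum]
    apply Finset.sum_congr rfl
    intro τ _
    rw [pow_succ]
    ring
  have hneg : ∑ τ ∈ (WAll n).filter (fun τ => ¬ 0 < V τ 1),
        (X:ℝ[X]) ^ (desW τ + (if 0 < V τ 1 then 1 else 0))
      = ∑ k ∈ Finset.Icc (1:ℤ) (n:ℤ), Bpoly n (-k) := by
    rw [Finset.sum_congr rfl (fun τ hτ => by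
      rw [if_neg (Finset.mem_filter.mp hτ).2, Nat.add_zero])]
    rw [← Finset.sum_fiberwise_of_maps_to (g := fun τ => -(V τ 1)) (t := Finset.Icc (1:ℤ) (n:ℤ))
      (fun τ hτ => by
        rw [Finset.mem_filter] at hτ
        have h1 := hV1 τ hτ.1
        have h2 := hτ.2
        rw [Finset.mem_Icc]
        show (1:ℤ) ≤ -(V τ 1) ∧ -(V τ 1) ≤ (n:ℤ)
        omega)
      (fun τ => (X:ℝ[X]) ^ desW τ)]
    apply Finset.sum_congr rfl
    intro k hk
    rw [Finset.mem_Icc] at hk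
    have hset : ((WAll n).filter (fun τ => ¬ 0 < V τ 1)).filter (fun τ => -(V τ 1) = k)
        = Wset n (-k) := by
      unfold Wset
      rw [Finset.filter_filter]
      apply Finset.filter_congr
      intro τ _
      constructor
      · rintro ⟨_, h⟩
        omega
      · intro h
        exact ⟨by omega, by omega⟩
    rw [hset, BpolyA]
  rw [hpos, hneg, ← Finset.sum_add_distrib]

lemma base_one : Bpoly 1 (1:ℤ) = 1 := by
  rw [BpolyA]
  have hset : Wset 1 (1:ℤ) = {fun _ => 1} := by
    apply Finset.ext
    intro w
    rw [mem_Wset, Finset.mem_singleton]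
    constructor
    · rintro ⟨hS, hV⟩
      funext l
      have h0 : l = ⟨0, by omega⟩ := Fin.ext (by have := l.isLt; omega)
      have h1 : V w 1 = w ⟨0, by omega⟩ := V_in_range w 1 (by omega) (by omega)
      rw [h0, ← h1, hV]
    · rintro rfl
      refine ⟨⟨fun i => by norm_num, fun a b hab => Subsingleton.elim a b⟩, ?_⟩
      rw [V_in_range _ 1 (by omega) (by omega)]
  rw [hset, Finset.sum_singleton]
  have hd : desW (fun _ : Fin 1 => (1:ℤ)) = 0 := by
    unfold desW
    apply Finset.card_eq_zero.mpr
    rw [Finset.filter_eq_empty_iff]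
    intro i _
    have h0 : (i:ℕ) = 0 := by have := i.isLt; omega
    simp only [h0, Nat.zero_add, V_out_range (fun _ : Fin 1 => (1:ℤ)) 0 (by omega : ¬(1 ≤ 0 ∧ 0 ≤ 1))]
    rw [V_in_range _ 1 (by omega) (by omega)]
    norm_num
  rw [hd, pow_zero]

lemma G_Bpoly : ∀ n : ℕ, ∀ k : ℕ, 1 ≤ k → k ≤ n → G n (Bpoly n (k:ℤ)) := by
  intro n
  induction n with
  | zero => intro k h1 h2; omega
  | succ n ih =>
      intro k hk1 hk2
      rcases Nat.lt_or_ge k (n+1) with hlt | hge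
      · have hn1 : 1 ≤ n := by omega
        rw [step_lemma hn1 hk1 (by omega)]
        exact G_Top (ih k hk1 (by omega))
      · have hkeq : k = n+1 := by omega
        subst hkeq
        rcases Nat.eq_zero_or_pos n with rfl | hn
        · have hc : (((0+1 : ℕ)) : ℤ) = 1 := by norm_num
          rw [hc, base_one]
          have h1 : G 1 (0 + C (1:ℝ) * eb 0 (1 - 1 - 2*0)) :=
            G.addB 1 0 1 0 (by omega) (by norm_num) (G.zero 1)
          simpa [eb] using h1
        · have hcast : (((n+1:ℕ)):ℤ) = (n:ℤ)+1 := by push_cast; ring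
          rw [hcast, top_count hn, regroup hn]
          apply G_sum
          intro k hkmem
          rw [Finset.mem_Icc] at hkmem
          have hk' : k = ((k.toNat : ℕ) : ℤ) := by omega
          rw [hk', R_lemma n ((k.toNat : ℕ) : ℤ)]
          exact G_XR (ih k.toNat (by omega) (by omega))

end Stmt7

/-- For `1 ≤ k ≤ n`, the polynomial `\overline{B}_{n,k}(t) = B_{n,k}(t) + B_{n,-k}(t)` is
gamma-positive with center of symmetry `n/2`. -/
theorem stmt7 (n k : ℕ) (hn : 1 ≤ n) (hk1 : 1 ≤ k) (hk2 : k ≤ n) :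
    ∃ γ : ℕ → ℝ, (∀ i, i ≤ n / 2 → 0 ≤ γ i) ∧
      Bpoly n (k : ℤ) + Bpoly n (-(k : ℤ)) =
        ∑ i ∈ Finset.range (n / 2 + 1),
          Polynomial.C (γ i) * Polynomial.X ^ i * (1 + Polynomial.X) ^ (n - 2 * i) := by
  obtain ⟨γ, hγ, hrep⟩ := Stmt7.G_gamma (Stmt7.G_Bpoly n k hk1 hk2)
  refine ⟨γ, fun i _ => hγ i, ?_⟩
  rw [Stmt7.R_lemma n (k:ℤ)]
  exact hrep
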